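/- In the set-cover reduction instance of the single-player multi-activity cost game, any utility-maximizing output vector of the player is binary (each coordinate is 0 or 1), and the set of activities with output 1 forms a minimum-size set cover of the universe; conversely, the indicator vector of any minimum set cover is utility-maximizing. -/
import Mathlib


open Finset

noncomputable section SetCover

open scoped Classical

/-- utility of the single player in the set-cover reduction instance:
contest `ℓ ∈ [k̂]` pays `m̂ + 1/2` if `b ℓ ≥ 1`; contest `k̂ + j` pays `1` if
`Σ_{ℓ : j ∈ S ℓ} b ℓ ≥ 1`; cost is `(m̂+1) Σ_ℓ b ℓ`. -/
def scUtil (m k : ℕ) (S : Fin k → Finset (Fin m)) (b : Fin k → ℝ) : ℝ :=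
  (∑ ℓ : Fin k, if 1 ≤ b ℓ then (m : ℝ) + 1 / 2 else 0)
  + (∑ j : Fin m,
      if 1 ≤ ∑ ℓ ∈ univ.filter (fun ℓ => j ∈ S ℓ), b ℓ then (1 : ℝ) else 0)
  - ((m : ℝ) + 1) * ∑ ℓ : Fin k, b ℓ

/-- `C` is a set cover of the universe -/
def IsCover {m k : ℕ} (S : Fin k → Finset (Fin m)) (C : Finset (Fin k)) : Prop :=
  ∀ j : Fin m, ∃ ℓ ∈ C, j ∈ S ℓ


private lemma scUtil_eq' (m k : ℕ) (S : Fin k → Finset (Fin m)) (b : Fin k → ℝ) :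
    scUtil m k S b =
      ((univ.filter (fun ℓ => 1 ≤ b ℓ)).card : ℝ) * ((m:ℝ) + 1/2)
      + ((m : ℝ) - (univ.filter (fun j => ¬ (1 ≤ ∑ ℓ ∈ univ.filter (fun ℓ => j ∈ S ℓ), b ℓ))).card)
      - ((m:ℝ)+1) * ∑ ℓ, b ℓ := by
  unfold scUtil
  congr 2
  · rw [← Finset.sum_filter, Finset.sum_const, nsmul_eq_mul]
  · rw [← Finset.sum_filter, Finset.sum_const, nsmul_eq_mul, mul_one]
    have h := Finset.card_filter_add_card_filter_not (s := (univ : Finset (Fin m)))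
      (p := fun j => 1 ≤ ∑ ℓ ∈ univ.filter (fun ℓ => j ∈ S ℓ), b ℓ)
    rw [Finset.card_univ, Fintype.card_fin] at h
    have h2 : ((filter (fun j => 1 ≤ ∑ ℓ ∈ filter (fun ℓ => j ∈ S ℓ) univ, b ℓ) univ).card : ℝ) +
        ((filter (fun a => ¬1 ≤ ∑ ℓ ∈ filter (fun ℓ => a ∈ S ℓ) univ, b ℓ) univ).card : ℝ) = m := by
      exact_mod_cast congrArg (Nat.cast : ℕ → ℝ) h
    linarith

private lemma scUtil_indicator' (m k : ℕ) (S : Fin k → Finset (Fin m)) (C : Finset (Fin k))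
    (hC : IsCover S C) :
    scUtil m k S (fun ℓ => if ℓ ∈ C then 1 else 0) = (m : ℝ) - (C.card : ℝ) / 2 := by
  have hsum : ∀ s : Finset (Fin k), (∑ ℓ ∈ s, if ℓ ∈ C then (1:ℝ) else 0) = ((s ∩ C).card : ℝ) := by
    intro s
    rw [Finset.sum_ite_mem, Finset.sum_const, nsmul_eq_mul, mul_one]
  unfold scUtil
  have h1 : (∑ ℓ : Fin k, if 1 ≤ (if ℓ ∈ C then (1:ℝ) else 0) then (m : ℝ) + 1 / 2 else 0)
      = (C.card : ℝ) * ((m:ℝ) + 1/2) := by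
    rw [← Finset.sum_filter]
    have : univ.filter (fun ℓ => 1 ≤ (if ℓ ∈ C then (1:ℝ) else 0)) = C := by
      ext ℓ
      by_cases h : ℓ ∈ C <;> simp [h]
    rw [this, Finset.sum_const, nsmul_eq_mul]
  have h2 : (∑ j : Fin m,
      if 1 ≤ ∑ ℓ ∈ univ.filter (fun ℓ => j ∈ S ℓ), (if ℓ ∈ C then (1:ℝ) else 0) then (1 : ℝ) else 0)
      = (m : ℝ) := by
    have key : ∀ j : Fin m,
        (if 1 ≤ ∑ ℓ ∈ univ.filter (fun ℓ => j ∈ S ℓ), (if ℓ ∈ C then (1:ℝ) else 0) then (1 : ℝ) else 0) = 1 := by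
      intro j
      rw [hsum]
      obtain ⟨ℓ, hℓC, hℓS⟩ := hC j
      have hne : ℓ ∈ (univ.filter (fun ℓ => j ∈ S ℓ)) ∩ C := by
        simp [hℓS, hℓC]
      have : 1 ≤ ((univ.filter (fun ℓ => j ∈ S ℓ)) ∩ C).card := Finset.card_pos.mpr ⟨ℓ, hne⟩
      rw [if_pos (by exact_mod_cast this)]
    rw [Finset.sum_congr rfl (fun j _ => key j), Finset.sum_const, nsmul_eq_mul, mul_one,
      Finset.card_univ, Fintype.card_fin]
  rw [h1, h2, hsum, Finset.univ_inter]
  ring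

private lemma scKey (m k : ℕ) (S : Fin k → Finset (Fin m)) (hcov : IsCover S univ)
    (C : Finset (Fin k)) (hC : IsCover S C)
    (hmin : ∀ C', IsCover S C' → C.card ≤ C'.card)
    (b : Fin k → ℝ) (hb : ∀ ℓ, 0 ≤ b ℓ) :
    scUtil m k S b ≤ (m:ℝ) - (C.card:ℝ)/2 ∧
    ((m:ℝ) - (C.card:ℝ)/2 ≤ scUtil m k S b →
      (∀ ℓ, b ℓ = 0 ∨ b ℓ = 1) ∧
      IsCover S (univ.filter (fun ℓ => b ℓ = 1)) ∧
      (∀ C' : Finset (Fin k), IsCover S C' →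
        (univ.filter (fun ℓ => b ℓ = 1)).card ≤ C'.card)) := by
  choose g hg' hg using hcov
  clear hg'
  set A : Finset (Fin k) := univ.filter (fun ℓ => 1 ≤ b ℓ) with hA
  set D : Finset (Fin m) :=
    univ.filter (fun j => ¬ (1 ≤ ∑ ℓ ∈ univ.filter (fun ℓ => j ∈ S ℓ), b ℓ)) with hD
  have hU : scUtil m k S b
      = (A.card : ℝ) * ((m:ℝ) + 1/2) + ((m:ℝ) - (D.card : ℝ)) - ((m:ℝ)+1) * ∑ ℓ, b ℓ :=
    scUtil_eq' m k S b
  have hAnn : (0:ℝ) ≤ (A.card : ℝ) := Nat.cast_nonneg _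
  have hDnn : (0:ℝ) ≤ (D.card : ℝ) := Nat.cast_nonneg _
  have hAsum : (A.card : ℝ) ≤ ∑ ℓ ∈ A, b ℓ := by
    have h1 : (A.card : ℝ) = ∑ ℓ ∈ A, (1:ℝ) := by
      rw [Finset.sum_const, nsmul_eq_mul, mul_one]
    have h2 : ∑ ℓ ∈ A, (1:ℝ) ≤ ∑ ℓ ∈ A, b ℓ :=
      Finset.sum_le_sum (fun ℓ hℓ => (Finset.mem_filter.mp hℓ).2)
    linarith
  have hsA : (A.card : ℝ) ≤ ∑ ℓ, b ℓ := by
    have h3 : ∑ ℓ ∈ A, b ℓ ≤ ∑ ℓ, b ℓ :=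
      Finset.sum_le_sum_of_subset_of_nonneg (Finset.subset_univ A) (fun ℓ _ _ => hb ℓ)
    linarith
  have hCm : (C.card : ℝ) ≤ (m : ℝ) := by
    have hgc : IsCover S (univ.image g) :=
      fun j => ⟨g j, Finset.mem_image_of_mem g (Finset.mem_univ j), hg j⟩
    have h1 : C.card ≤ m :=
      le_trans (hmin _ hgc) (le_trans Finset.card_image_le (by simp))
    exact_mod_cast h1
  by_cases hE : ∀ j : Fin m,
      (1 ≤ ∑ ℓ ∈ univ.filter (fun ℓ => j ∈ S ℓ), b ℓ) → ∃ ℓ ∈ A, j ∈ S ℓ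
  · -- E empty case
    have hC1cov : IsCover S (A ∪ D.image g) := by
      intro j
      by_cases hj : 1 ≤ ∑ ℓ ∈ univ.filter (fun ℓ => j ∈ S ℓ), b ℓ
      · obtain ⟨ℓ, hℓA, hℓ⟩ := hE j hj
        exact ⟨ℓ, Finset.mem_union_left _ hℓA, hℓ⟩
      · refine ⟨g j, Finset.mem_union_right _ ?_, hg j⟩
        exact Finset.mem_image_of_mem g (Finset.mem_filter.mpr ⟨Finset.mem_univ j, hj⟩)
    have hC1 : (C.card : ℝ) ≤ (A.card : ℝ) + (D.card : ℝ) := by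
      have h1 : C.card ≤ (A ∪ D.image g).card := hmin _ hC1cov
      have h2 : (A ∪ D.image g).card ≤ A.card + D.card :=
        le_trans (Finset.card_union_le _ _) (by
          exact Nat.add_le_add_left Finset.card_image_le _)
      exact_mod_cast le_trans h1 h2
    have hprod : ((m:ℝ)+1) * (A.card : ℝ) ≤ ((m:ℝ)+1) * ∑ ℓ, b ℓ :=
      mul_le_mul_of_nonneg_left hsA (by positivity)
    constructor
    · nlinarith [hU, hC1, hprod, hDnn]
    · intro hge
      -- derive D = ∅ and ∑ b = A.card
      have hx : (0:ℝ) ≤ ∑ ℓ, b ℓ - (A.card : ℝ) := by linarith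
      have hkey : (D.card : ℝ)/2 + ((m:ℝ)+1) * (∑ ℓ, b ℓ - (A.card : ℝ)) ≤ 0 := by
        nlinarith [hU, hC1, hge]
      have hTnn : (0:ℝ) ≤ ((m:ℝ)+1) * (∑ ℓ, b ℓ - (A.card : ℝ)) :=
        mul_nonneg (by positivity) hx
      have hd0 : (D.card : ℝ) = 0 := by linarith
      have hT0 : ((m:ℝ)+1) * (∑ ℓ, b ℓ - (A.card : ℝ)) = 0 := by linarith
      have hx0 : ∑ ℓ, b ℓ = (A.card : ℝ) := by
        rcases mul_eq_zero.mp hT0 with h | h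
        · exfalso; have : (0:ℝ) ≤ (m:ℝ) := Nat.cast_nonneg _; linarith
        · linarith
      have hDempty : D = ∅ := Finset.card_eq_zero.mp (by exact_mod_cast hd0)
      -- binary
      have hind : ∑ ℓ, (if ℓ ∈ A then (1:ℝ) else 0) = (A.card : ℝ) := by
        rw [Finset.sum_ite_mem, Finset.univ_inter, Finset.sum_const, nsmul_eq_mul, mul_one]
      have hzero : ∑ ℓ, (b ℓ - if ℓ ∈ A then (1:ℝ) else 0) = 0 := by
        rw [Finset.sum_sub_distrib, hind, hx0]; ring
      have hnn : ∀ ℓ ∈ (univ : Finset (Fin k)), 0 ≤ b ℓ - (if ℓ ∈ A then (1:ℝ) else 0) := by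
        intro ℓ _
        by_cases h : ℓ ∈ A
        · have h1 : 1 ≤ b ℓ := (Finset.mem_filter.mp h).2
          simp only [h, if_pos]; linarith
        · simp only [h, if_neg, if_false]
          simpa using hb ℓ
      have hbe : ∀ ℓ, b ℓ = if ℓ ∈ A then (1:ℝ) else 0 := by
        intro ℓ
        have := (Finset.sum_eq_zero_iff_of_nonneg hnn).mp hzero ℓ (Finset.mem_univ ℓ)
        linarith [this]
      have hfilter : univ.filter (fun ℓ => b ℓ = 1) = A := by
        ext ℓ
        simp only [Finset.mem_filter, Finset.mem_univ, true_and]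
        constructor
        · intro h1
          by_contra hna
          rw [hbe ℓ, if_neg hna] at h1
          exact zero_ne_one h1
        · intro ha
          rw [hbe ℓ, if_pos ha]
      have hAcov : IsCover S A := by
        intro j
        apply hE j
        by_contra hcon
        have : j ∈ D := Finset.mem_filter.mpr ⟨Finset.mem_univ j, hcon⟩
        rw [hDempty] at this
        exact absurd this (Finset.notMem_empty j)
      refine ⟨?_, ?_, ?_⟩
      · intro ℓ
        by_cases h : ℓ ∈ A
        · right; rw [hbe ℓ, if_pos h]
        · left; rw [hbe ℓ, if_neg h]
      · rw [hfilter]; exact hAcov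
      · intro C' hC'
        rw [hfilter]
        have hAC : (A.card : ℝ) ≤ (C.card : ℝ) := by nlinarith [hU, hge, hx0, hd0]
        have : A.card ≤ C.card := by exact_mod_cast hAC
        exact le_trans this (hmin C' hC')
  · -- E nonempty case
    push_neg at hE
    obtain ⟨j, hj1, hj2⟩ := hE
    have hsub : univ.filter (fun ℓ => j ∈ S ℓ) ⊆ univ.filter (fun ℓ => ¬ (1 ≤ b ℓ)) := by
      intro ℓ hℓ
      have hjS : j ∈ S ℓ := (Finset.mem_filter.mp hℓ).2
      refine Finset.mem_filter.mpr ⟨Finset.mem_univ ℓ, ?_⟩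
      intro h1
      exact hj2 ℓ (Finset.mem_filter.mpr ⟨Finset.mem_univ ℓ, h1⟩) hjS
    have ht : (1:ℝ) ≤ ∑ ℓ ∈ univ.filter (fun ℓ => ¬ (1 ≤ b ℓ)), b ℓ :=
      le_trans hj1 (Finset.sum_le_sum_of_subset_of_nonneg hsub (fun ℓ _ _ => hb ℓ))
    have hsplit : ∑ ℓ ∈ A, b ℓ + ∑ ℓ ∈ univ.filter (fun ℓ => ¬ (1 ≤ b ℓ)), b ℓ = ∑ ℓ, b ℓ :=
      Finset.sum_filter_add_sum_filter_not univ _ b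
    have hs1 : (A.card : ℝ) + 1 ≤ ∑ ℓ, b ℓ := by linarith
    have hprod2 : ((m:ℝ)+1) * ((A.card : ℝ) + 1) ≤ ((m:ℝ)+1) * ∑ ℓ, b ℓ :=
      mul_le_mul_of_nonneg_left hs1 (by positivity)
    have hbound : scUtil m k S b ≤ (m:ℝ) - (C.card:ℝ)/2 - 1 := by
      nlinarith [hU, hCm, hDnn, hAnn]
    exact ⟨by linarith, fun hge => absurd hge (by linarith)⟩

/-- Any utility-maximizing output vector in the set-cover reduction instance is binary and
its support is a minimum-size set cover; conversely, the indicator vector of any minimum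
set cover is utility-maximizing. -/
theorem set_cover_reduction (m k : ℕ) (S : Fin k → Finset (Fin m))
    (hcov : IsCover S univ) :
    (∀ b : Fin k → ℝ, (∀ ℓ, 0 ≤ b ℓ) →
      (∀ b' : Fin k → ℝ, (∀ ℓ, 0 ≤ b' ℓ) → scUtil m k S b' ≤ scUtil m k S b) →
      (∀ ℓ, b ℓ = 0 ∨ b ℓ = 1) ∧
      IsCover S (univ.filter (fun ℓ => b ℓ = 1)) ∧
      (∀ C : Finset (Fin k), IsCover S C →
        (univ.filter (fun ℓ => b ℓ = 1)).card ≤ C.card)) ∧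
    (∀ C : Finset (Fin k), IsCover S C →
      (∀ C' : Finset (Fin k), IsCover S C' → C.card ≤ C'.card) →
      ∀ b' : Fin k → ℝ, (∀ ℓ, 0 ≤ b' ℓ) →
        scUtil m k S b' ≤ scUtil m k S (fun ℓ => if ℓ ∈ C then 1 else 0)) := by
  constructor
  · intro b hb hmax
    obtain ⟨C0, hC0mem, hC0min⟩ :=
      Finset.exists_min_image ((univ : Finset (Finset (Fin k))).filter (fun C => IsCover S C))
        Finset.card ⟨univ, Finset.mem_filter.mpr ⟨Finset.mem_univ _, hcov⟩⟩
    have hC0 : IsCover S C0 := (Finset.mem_filter.mp hC0mem).2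
    have hC0min' : ∀ C', IsCover S C' → C0.card ≤ C'.card := fun C' h =>
      hC0min C' (Finset.mem_filter.mpr ⟨Finset.mem_univ _, h⟩)
    have hge : (m:ℝ) - (C0.card:ℝ)/2 ≤ scUtil m k S b := by
      rw [← scUtil_indicator' m k S C0 hC0]
      exact hmax _ (fun ℓ => by by_cases h : ℓ ∈ C0 <;> simp [h])
    exact (scKey m k S hcov C0 hC0 hC0min' b hb).2 hge
  · intro C hC hmin b' hb'
    rw [scUtil_indicator' m k S C hC]
    exact (scKey m k S hcov C hC hmin b' hb').1

end SetCover
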